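/- Let g be a Lie algebra over a field k, X = k⊕g, R the associated Yang–Baxter operator, and f: X → X linear with f(1,0) = (s,w) and f(0,x) = (f₀(x), f₁(x)). Then the Yang–Baxter coboundary δ¹_{YB}(f) = R(f⊗1) + R(1⊗f) − (f⊗1)R − (1⊗f)R evaluated on (a,x)⊗(b,y) equals a·(1,0)⊗(0,[w,y]) + b·(1,0)⊗(0,[x,w]) + (1,0)⊗(0,[f₁(x),y]) + (1,0)⊗(0,[x,f₁(y)]) − s·(1,0)⊗(0,[x,y]) − (0,w)⊗(0,[x,y]) − (1,0)⊗(f₀([x,y]),0) − (1,0)⊗(0,f₁([x,y])). -/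

import Mathlib

open TensorProduct

noncomputable section

variable (k : Type*) [CommRing k] (L : Type*) [LieRing L] [LieAlgebra k L]

abbrev X := k × L

/-- The self-distributive operation `q((a,x)⊗(b,y)) = (ab, b•x + ⁅x,y⁆)` as a bilinear map. -/
def qc : X k L →ₗ[k] X k L →ₗ[k] X k L :=
  LinearMap.mk₂ k (fun u v => (u.1 * v.1, v.1 • u.2 + ⁅u.2, v.2⁆))
    (fun m₁ m₂ n => by
      simp only [Prod.fst_add, Prod.snd_add, Prod.mk_add_mk, Prod.mk.injEq]
      exact ⟨by ring, by rw [smul_add, add_lie]; abel⟩)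
    (fun c m n => by
      simp only [Prod.smul_fst, Prod.smul_snd, Prod.smul_mk, smul_eq_mul, Prod.mk.injEq]
      exact ⟨by ring, by rw [smul_lie, smul_comm n.1 c, smul_add]⟩)
    (fun m n₁ n₂ => by
      simp only [Prod.fst_add, Prod.snd_add, Prod.mk_add_mk, Prod.mk.injEq]
      exact ⟨by ring, by rw [add_smul, lie_add]; abel⟩)
    (fun c m n => by
      simp only [Prod.smul_fst, Prod.smul_snd, Prod.smul_mk, smul_eq_mul, Prod.mk.injEq]
      exact ⟨by ring, by rw [lie_smul, smul_add, mul_smul]⟩)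

/-- The comultiplication `Δ(a,x) = (a,x)⊗(1,0) + (1,0)⊗(0,x)`. -/
def Delta : X k L →ₗ[k] X k L ⊗[k] X k L where
  toFun u := u ⊗ₜ (1, 0) + (1, 0) ⊗ₜ ((0 : k), u.2)
  map_add' u v := by
    rw [show ((0 : k), (u + v).2) = ((0 : k), u.2) + ((0 : k), v.2) by
      simp [Prod.mk_add_mk]]
    rw [add_tmul, tmul_add]; abel
  map_smul' c u := by
    rw [show ((0 : k), (c • u).2) = c • ((0 : k), u.2) by simp [Prod.smul_mk],
      tmul_smul]
    simp [smul_add, smul_tmul']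

/-- The counit `ε(a,x) = a`. -/
def eps : X k L →ₗ[k] k := LinearMap.fst k k L

/-- The Yang-Baxter operator `R(u ⊗ v) = v^{(1)} ⊗ q(u ⊗ v^{(2)})` associated to the
Lie algebra `L`. -/
def Rop : X k L ⊗[k] X k L →ₗ[k] X k L ⊗[k] X k L :=
  TensorProduct.lift <| LinearMap.mk₂ k
    (fun u v => (LinearMap.lTensor (X k L) (qc k L u)) (Delta k L v))
    (fun u₁ u₂ v => by simp [map_add, LinearMap.lTensor_add, LinearMap.add_apply])
    (fun c u v => by simp [map_smul, LinearMap.lTensor_smul, LinearMap.smul_apply])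
    (fun u v₁ v₂ => by simp)
    (fun c u v => by simp)

variable {k}

/-- `F ⊗ 1` acting on the first two factors of `V ⊗ (V ⊗ V)`. -/
def map12 {V : Type*} [AddCommGroup V] [Module k V]
    (F : V ⊗[k] V →ₗ[k] V ⊗[k] V) :
    V ⊗[k] (V ⊗[k] V) →ₗ[k] V ⊗[k] (V ⊗[k] V) :=
  (TensorProduct.assoc k V V V).toLinearMap ∘ₗ F.rTensor V ∘ₗ
    (TensorProduct.assoc k V V V).symm.toLinearMap

/-- `1 ⊗ F` acting on the last two factors of `V ⊗ (V ⊗ V)`. -/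
def map23 {V : Type*} [AddCommGroup V] [Module k V]
    (F : V ⊗[k] V →ₗ[k] V ⊗[k] V) :
    V ⊗[k] (V ⊗[k] V) →ₗ[k] V ⊗[k] (V ⊗[k] V) :=
  F.lTensor V

/-- The Yang-Baxter equation for an operator `F : V ⊗ V → V ⊗ V`. -/
def YBE {V : Type*} [AddCommGroup V] [Module k V]
    (F : V ⊗[k] V →ₗ[k] V ⊗[k] V) : Prop :=
  map12 F ∘ₗ map23 F ∘ₗ map12 F = map23 F ∘ₗ map12 F ∘ₗ map23 F

/-- The second Yang-Baxter differential. -/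
def dYB {V : Type*} [AddCommGroup V] [Module k V]
    (R φ : V ⊗[k] V →ₗ[k] V ⊗[k] V) :
    V ⊗[k] (V ⊗[k] V) →ₗ[k] V ⊗[k] (V ⊗[k] V) :=
  map12 R ∘ₗ map23 R ∘ₗ map12 φ + map12 R ∘ₗ map23 φ ∘ₗ map12 R +
    map12 φ ∘ₗ map23 R ∘ₗ map12 R - map23 R ∘ₗ map12 R ∘ₗ map23 φ -
    map23 R ∘ₗ map12 φ ∘ₗ map23 R - map23 φ ∘ₗ map12 R ∘ₗ map23 R

/-- The first Yang-Baxter differential. -/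
def dYB1 {V : Type*} [AddCommGroup V] [Module k V]
    (R : V ⊗[k] V →ₗ[k] V ⊗[k] V) (f : V →ₗ[k] V) :
    V ⊗[k] V →ₗ[k] V ⊗[k] V :=
  R ∘ₗ f.rTensor V + R ∘ₗ f.lTensor V - f.rTensor V ∘ₗ R - f.lTensor V ∘ₗ R

end

/-!
The operator `R` is the flip `τ` plus the bracket term `(u ⊗ v) ↦ (1,0) ⊗ (0, ⁅u.2, v.2⁆)`.
The coboundary `δ¹(f)` is additive in `R` and vanishes for `R = τ`, since `τ` intertwines
`f ⊗ 1` with `1 ⊗ f`; so only the bracket term contributes, and substituting the decomposition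
of `f` gives the formula.
-/

section Coboundary

variable {k V : Type*} [CommRing k] [AddCommGroup V] [Module k V]

theorem dYB1_add (R R' : V ⊗[k] V →ₗ[k] V ⊗[k] V) (f : V →ₗ[k] V) :
    dYB1 (R + R') f = dYB1 R f + dYB1 R' f := by
  simp only [dYB1, LinearMap.add_comp, LinearMap.comp_add]
  abel

theorem dYB1_comm (f : V →ₗ[k] V) :
    dYB1 (TensorProduct.comm k V V).toLinearMap f = 0 := by
  ext u v
  simp [dYB1]

theorem dYB1_tmul (R : V ⊗[k] V →ₗ[k] V ⊗[k] V) (f : V →ₗ[k] V) (u v : V) :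
    dYB1 R f (u ⊗ₜ v) =
      R (f u ⊗ₜ v) + R (u ⊗ₜ f v) - f.rTensor V (R (u ⊗ₜ v)) - f.lTensor V (R (u ⊗ₜ v)) :=
  rfl

end Coboundary

section BracketPart

variable (k : Type*) [CommRing k] (L : Type*) [LieRing L] [LieAlgebra k L]

def bracketPart : X k L ⊗[k] X k L →ₗ[k] X k L ⊗[k] X k L :=
  TensorProduct.mk k (X k L) (X k L) (1, 0) ∘ₗ LinearMap.inr k k L ∘ₗ
    (LieModule.toModuleHom k L L : L ⊗[k] L →ₗ[k] L) ∘ₗ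
    TensorProduct.map (LinearMap.snd k k L) (LinearMap.snd k k L)

variable {k L}

@[simp]
theorem bracketPart_tmul (u v : X k L) :
    bracketPart k L (u ⊗ₜ v) = ((1 : k), (0 : L)) ⊗ₜ ((0 : k), ⁅u.2, v.2⁆) := by
  simp [bracketPart]

theorem Rop_tmul (u v : X k L) :
    Rop k L (u ⊗ₜ v) = v ⊗ₜ u + ((1 : k), (0 : L)) ⊗ₜ ((0 : k), ⁅u.2, v.2⁆) := by
  simp [Rop, Delta, qc]

theorem Rop_eq_comm_add_bracketPart :
    Rop k L = (TensorProduct.comm k (X k L) (X k L)).toLinearMap + bracketPart k L :=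
  TensorProduct.ext' fun u v => by simp [Rop_tmul]

theorem dYB1_Rop_tmul (f : X k L →ₗ[k] X k L) (u v : X k L) :
    dYB1 (Rop k L) f (u ⊗ₜ v) =
      ((1 : k), (0 : L)) ⊗ₜ ((0 : k), ⁅(f u).2, v.2⁆) +
        ((1 : k), (0 : L)) ⊗ₜ ((0 : k), ⁅u.2, (f v).2⁆) -
        f (1, 0) ⊗ₜ ((0 : k), ⁅u.2, v.2⁆) - ((1 : k), (0 : L)) ⊗ₜ f (0, ⁅u.2, v.2⁆) := by
  rw [Rop_eq_comm_add_bracketPart, dYB1_add, dYB1_comm, zero_add, dYB1_tmul]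
  simp only [bracketPart_tmul, LinearMap.rTensor_tmul, LinearMap.lTensor_tmul]

end BracketPart

/-- Explicit formula for the Yang-Baxter coboundary `δ¹_{YB}(f)` on simple tensors,
where `f(a,x) = a•(s,w) + (f₀(x), f₁(x))`. -/
theorem dYB1_apply {k : Type*} [Field k] {L : Type*} [LieRing L] [LieAlgebra k L]
    (f : X k L →ₗ[k] X k L) (s : k) (w : L) (f₀ : L →ₗ[k] k) (f₁ : L →ₗ[k] L)
    (hf : ∀ (a : k) (x : L), f (a, x) = a • ((s, w) : X k L) + (f₀ x, f₁ x))
    (a b : k) (x y : L) :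
    dYB1 (Rop k L) f (((a, x) : X k L) ⊗ₜ[k] ((b, y) : X k L)) =
      a • ((((1 : k), (0 : L)) : X k L) ⊗ₜ[k] (((0 : k), ⁅w, y⁆) : X k L)) +
        b • ((((1 : k), (0 : L)) : X k L) ⊗ₜ[k] (((0 : k), ⁅x, w⁆) : X k L)) +
        (((1 : k), (0 : L)) : X k L) ⊗ₜ[k] (((0 : k), ⁅f₁ x, y⁆) : X k L) +
        (((1 : k), (0 : L)) : X k L) ⊗ₜ[k] (((0 : k), ⁅x, f₁ y⁆) : X k L) -
        s • ((((1 : k), (0 : L)) : X k L) ⊗ₜ[k] (((0 : k), ⁅x, y⁆) : X k L)) -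
        (((0 : k), w) : X k L) ⊗ₜ[k] (((0 : k), ⁅x, y⁆) : X k L) -
        (((1 : k), (0 : L)) : X k L) ⊗ₜ[k] ((f₀ ⁅x, y⁆, (0 : L)) : X k L) -
        (((1 : k), (0 : L)) : X k L) ⊗ₜ[k] (((0 : k), f₁ ⁅x, y⁆) : X k L) := by
  have hf_snd (c : k) (z : L) : (f (c, z)).2 = c • w + f₁ z := by simp [hf]
  have hf_unit : f (1, 0) = s • ((1 : k), (0 : L)) + ((0 : k), w) := by
    ext <;> simp [hf]
  have hf_inr (z : L) : f (0, z) = (f₀ z, (0 : L)) + ((0 : k), f₁ z) := by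
    ext <;> simp [hf]
  rw [dYB1_Rop_tmul, hf_snd, hf_snd, hf_unit, hf_inr, add_lie, lie_add, smul_lie, lie_smul]
  simp only [← Prod.zero_mk_add_zero_mk, ← Prod.smul_zero_mk, tmul_add, add_tmul, tmul_smul,
    smul_tmul']
  abel
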